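/- arXiv:1004.1563 — 8 statements merged into one kernel-verified Lean document; each statement's English description precedes it below -/
import Mathlib

section
/- For every integer n ≥ 2, the Möbius function satisfies μ(n) = -∑_{i=1}^{⌊√n⌋} ∑_{j=1}^{⌊√n⌋} μ(i)·μ(j)·[i·j divides n], where [i·j divides n] equals 1 if i·j ∣ n and 0 otherwise. -/
/-!
Write `f i j = μ i μ j [i j ∣ n]`, `P = [1, √n]` and `Q = [1, n]`. Since
`∑_{d ∣ m} μ d = [m = 1]`, a full row sums to `∑_{j ∈ Q} f i j = μ i [i = n]`; hence the sum
of `f` over `Q × Q` is `μ n`, while the sums over `P × Q` and `Q × P` vanish because `n ∉ P`.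
The sum over `(Q \ P) × (Q \ P)` also vanishes, as `i j > n` there. Inclusion–exclusion for
the four blocks leaves `0 = μ n + ∑_{P × P} f`.
-/

open ArithmeticFunction Finset

theorem Finset.sum_sdiff_sum_sdiff {ι G : Type*} [AddCommGroup G] [DecidableEq ι]
    {s t : Finset ι} (h : s ⊆ t) (f : ι → ι → G) :
    ∑ i ∈ t \ s, ∑ j ∈ t \ s, f i j =
      ∑ i ∈ t, ∑ j ∈ t, f i j - ∑ i ∈ s, ∑ j ∈ t, f i j
        - ∑ i ∈ t, ∑ j ∈ s, f i j + ∑ i ∈ s, ∑ j ∈ s, f i j := by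
  simp only [sum_sdiff_eq_sub h, sum_sub_distrib]
  abel

lemma sum_divisors_moebius (m : ℕ) :
    ∑ d ∈ m.divisors, (moebius d : ℤ) = if m = 1 then 1 else 0 := by
  rw [← coe_mul_zeta_apply, moebius_mul_coe_zeta, one_apply]

lemma filter_dvd_Icc_eq_divisors {m n : ℕ} (hm : m ≠ 0) (hmn : m ≤ n) :
    {j ∈ Icc 1 n | j ∣ m} = m.divisors := by
  ext j
  simp only [mem_filter, mem_Icc, Nat.mem_divisors]
  constructor
  · exact fun h => ⟨h.2, hm⟩
  · rintro ⟨hj, -⟩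
    exact ⟨⟨Nat.pos_of_dvd_of_pos hj (Nat.pos_of_ne_zero hm),
      (Nat.le_of_dvd (Nat.pos_of_ne_zero hm) hj).trans hmn⟩, hj⟩

lemma sum_Icc_moebius_mul_ite_mul_dvd {n : ℕ} (hn : n ≠ 0) (i : ℕ) :
    ∑ j ∈ Icc 1 n, (moebius j : ℤ) * (if i * j ∣ n then 1 else 0) =
      if i = n then 1 else 0 := by
  by_cases hi : i ∣ n
  · obtain ⟨m, rfl⟩ := hi
    have hi0 : i ≠ 0 := left_ne_zero_of_mul hn
    have hm : m ≠ 0 := right_ne_zero_of_mul hn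
    simp_rw [mul_dvd_mul_iff_left hi0, mul_boole, ← sum_filter,
      filter_dvd_Icc_eq_divisors hm (Nat.le_mul_of_pos_left m (Nat.pos_of_ne_zero hi0)),
      sum_divisors_moebius, left_eq_mul₀ hi0]
  · have hin : i ≠ n := fun h => hi (h ▸ dvd_rfl)
    rw [if_neg hin]
    exact sum_eq_zero fun j _ => by rw [if_neg fun h => hi (dvd_of_mul_right_dvd h), mul_zero]

lemma sum_sum_Icc_moebius_mul_moebius_ite_mul_dvd {n : ℕ} (hn : n ≠ 0) (s : Finset ℕ) :
    ∑ i ∈ s, ∑ j ∈ Icc 1 n,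
        (moebius i : ℤ) * (moebius j : ℤ) * (if i * j ∣ n then 1 else 0) =
      if n ∈ s then (moebius n : ℤ) else 0 := by
  simp_rw [mul_assoc, ← mul_sum, sum_Icc_moebius_mul_ite_mul_dvd hn, mul_boole, sum_ite_eq']

lemma not_mul_dvd_of_sqrt_lt {n i j : ℕ} (hn : n ≠ 0) (hi : Nat.sqrt n < i)
    (hj : Nat.sqrt n < j) : ¬ i * j ∣ n := fun h =>
  (Nat.le_of_dvd (Nat.pos_of_ne_zero hn) h).not_gt
    ((Nat.lt_succ_sqrt n).trans_le (Nat.mul_le_mul hi hj))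

/-- For every integer `n ≥ 2`, the Möbius function satisfies
`μ(n) = -∑_{i=1}^{⌊√n⌋} ∑_{j=1}^{⌊√n⌋} μ(i)·μ(j)·[i·j ∣ n]`. -/
theorem moebius_double_sum_identity (n : ℕ) (hn : 2 ≤ n) :
    (moebius n : ℤ) =
      -∑ i ∈ Finset.Icc 1 (Nat.sqrt n), ∑ j ∈ Finset.Icc 1 (Nat.sqrt n),
        (moebius i : ℤ) * (moebius j : ℤ) * (if (i * j) ∣ n then 1 else 0) := by
  set f : ℕ → ℕ → ℤ := fun i j =>
    (moebius i : ℤ) * (moebius j : ℤ) * (if i * j ∣ n then 1 else 0) with hf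
  show (moebius n : ℤ) = -∑ i ∈ Icc 1 (Nat.sqrt n), ∑ j ∈ Icc 1 (Nat.sqrt n), f i j
  have hn0 : n ≠ 0 := by omega
  have hsqrt : Nat.sqrt n < n := Nat.sqrt_lt_self (by omega)
  have hsymm (i j : ℕ) : f j i = f i j := by
    simp only [hf, mul_comm j i, mul_comm (moebius j : ℤ)]
  have hfull : ∑ i ∈ Icc 1 n, ∑ j ∈ Icc 1 n, f i j = moebius n := by
    rw [sum_sum_Icc_moebius_mul_moebius_ite_mul_dvd hn0, if_pos (mem_Icc.2 ⟨by omega, le_rfl⟩)]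
  have hrows : ∑ i ∈ Icc 1 (Nat.sqrt n), ∑ j ∈ Icc 1 n, f i j = 0 := by
    rw [sum_sum_Icc_moebius_mul_moebius_ite_mul_dvd hn0,
      if_neg fun h => hsqrt.not_ge (mem_Icc.1 h).2]
  have hcols : ∑ i ∈ Icc 1 n, ∑ j ∈ Icc 1 (Nat.sqrt n), f i j = 0 := by
    rw [sum_comm, ← hrows]
    exact sum_congr rfl fun i _ => sum_congr rfl fun j _ => hsymm i j
  have hlarge :
      ∑ i ∈ Icc 1 n \ Icc 1 (Nat.sqrt n), ∑ j ∈ Icc 1 n \ Icc 1 (Nat.sqrt n), f i j = 0 :=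
    sum_eq_zero fun i hi => sum_eq_zero fun j hj => by
      simp only [mem_sdiff, mem_Icc] at hi hj
      simp [hf, not_mul_dvd_of_sqrt_lt hn0 (show Nat.sqrt n < i by omega)
        (show Nat.sqrt n < j by omega)]
  linarith [sum_sdiff_sum_sdiff (Icc_subset_Icc_right (a := 1) hsqrt.le) f]
end

section
/- Fix k ≥ 1 and let p_1 < p_2 < ... denote the primes in increasing order. Then the averages (1/n)·∑_{j=1}^{n} μ̃_k(j) converge, as n → ∞, to -∏_{i=1}^{k} (1 - 1/p_i)². -/
open ArithmeticFunction Finset Filter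

/-- `nthPrime k` is the `k`-th prime in the increasing enumeration of the primes,
indexed from 1 (so `nthPrime 1 = 2`, `nthPrime 2 = 3`, ...). -/
noncomputable def nthPrime (k : ℕ) : ℕ := Nat.nth Nat.Prime (k - 1)

/-- The `p_k`-smooth part of `n`: the product of all prime powers `p ^ (ν_p n)` in the
factorization of `n` with `p ≤ p_k`. -/
noncomputable def smoothPart (k n : ℕ) : ℕ :=
  n.factorization.prod fun p e => if p ≤ nthPrime k then p ^ e else 1

/-- The `k`-th Möbius prime-function: writing `n = s · m` with `s` the `p_k`-smooth part of `n`
and `m` coprime to all primes `≤ p_k`, it equals `μ s` if `m = 1` and `-μ s` if `m > 1`. -/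
noncomputable def mobiusP (k n : ℕ) : ℤ :=
  if n / smoothPart k n = 1 then moebius (smoothPart k n) else -moebius (smoothPart k n)

/-!
Writing `s(n)` for the `p_k`-smooth part of `n`, one has `μ̃_k(n) = 2 [s(n) = n] μ(n) - μ(s(n))`.
The first term is supported on the divisors of the primorial `P = ∏_{p ≤ p_k} p`, so its average
tends to `0`. The second is multiplicative, and comparing prime powers gives
`μ ∘ s = μ_P * μ_P * 1`, where `μ_P` is `μ` restricted to the divisors of `P`. Hence
`∑_{n ≤ N} μ(s(n)) = ∑_{a, b ∣ P} μ(a) μ(b) ⌊N / ab⌋`, whose average tends to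
`(∑_{a ∣ P} μ(a) / a)² = ∏_{p ≤ p_k} (1 - 1/p)²`.
-/

open scoped ArithmeticFunction.Moebius ArithmeticFunction.zeta Topology

namespace ArithmeticFunction

variable (R : Type*) [CommRing R]

def moebiusDvd (M : ℕ) : ArithmeticFunction R :=
  ⟨fun a => if a ∣ M then (μ a : R) else 0, by simp⟩

variable {R}

theorem moebiusDvd_apply {M a : ℕ} : moebiusDvd R M a = if a ∣ M then (μ a : R) else 0 := rfl

theorem isMultiplicative_moebiusDvd (M : ℕ) : (moebiusDvd R M).IsMultiplicative := by
  refine ⟨by simp [moebiusDvd_apply], fun {m n} hmn => ?_⟩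
  have hdvd : m * n ∣ M ↔ m ∣ M ∧ n ∣ M :=
    ⟨fun h => ⟨dvd_of_mul_right_dvd h, dvd_of_mul_left_dvd h⟩,
      fun h => hmn.mul_dvd_of_dvd_of_dvd h.1 h.2⟩
  simp only [moebiusDvd_apply, hdvd, isMultiplicative_moebius.map_mul_of_coprime hmn,
    Int.cast_mul]
  split_ifs <;> simp_all

theorem moebiusDvd_apply_of_primeFactors_subset {M a : ℕ} (hM : M ≠ 0)
    (h : a.primeFactors ⊆ M.primeFactors) : moebiusDvd R M a = μ a := by
  by_cases ha : Squarefree a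
  · rw [moebiusDvd_apply, if_pos]
    rw [← Nat.prod_primeFactors_of_squarefree ha]
    exact (Nat.prod_primeFactors_dvd_iff hM).2 h
  · simp [moebiusDvd_apply, moebius_eq_zero_of_not_squarefree ha]

theorem sum_divisors_moebius (n : ℕ) : ∑ d ∈ n.divisors, (μ d : R) = if n = 1 then 1 else 0 := by
  have h : ((μ : ArithmeticFunction R) * ζ) n = (1 : ArithmeticFunction R) n := by
    rw [coe_moebius_mul_coe_zeta]
  simpa only [coe_mul_zeta_apply, intCoe_apply, one_apply] using h

theorem moebiusDvd_mul_zeta_apply {M m : ℕ} (hm : m ≠ 0) :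
    (moebiusDvd R M * ζ) m = if m.Coprime M then 1 else 0 := by
  have hdiv : {d ∈ m.divisors | d ∣ M} = (m.gcd M).divisors := by
    ext d
    simp [Nat.dvd_gcd_iff, hm]
  rw [coe_mul_zeta_apply]
  simp only [moebiusDvd_apply]
  rw [← sum_filter, hdiv, sum_divisors_moebius]

theorem sum_Ioc_mul_eq_sum_divisors {f g : ArithmeticFunction R} {M : ℕ} (hM : M ≠ 0)
    (hf : ∀ a, f a ≠ 0 → a ∣ M) (N : ℕ) :
    ∑ n ∈ Ioc 0 N, (f * g) n = ∑ a ∈ M.divisors, f a * ∑ m ∈ Ioc 0 (N / a), g m := by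
  have hfilter : {a ∈ Ioc 0 N | a ∣ M} = {a ∈ M.divisors | a ≤ N} := by
    ext a
    simp only [mem_filter, mem_Ioc, Nat.mem_divisors]
    constructor
    · rintro ⟨⟨-, haN⟩, haM⟩; exact ⟨⟨haM, hM⟩, haN⟩
    · rintro ⟨⟨haM, -⟩, haN⟩; exact ⟨⟨Nat.pos_of_dvd_of_pos haM (Nat.pos_of_ne_zero hM), haN⟩, haM⟩
  have hle : ∀ a ∈ M.divisors, f a * ∑ m ∈ Ioc 0 (N / a), g m ≠ 0 → a ≤ N := by
    intro a _ ha
    by_contra! haN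
    simp [Nat.div_eq_of_lt haN] at ha
  rw [sum_Ioc_mul_eq_sum_sum, ← sum_filter_of_ne fun a _ ha => hf a (left_ne_zero_of_mul ha),
    ← sum_filter_of_ne hle, hfilter]

theorem moebiusDvd_mul_apply_of_coprime (g : ArithmeticFunction R) {M n : ℕ} (hn : n ≠ 0)
    (hnM : n.Coprime M) : (moebiusDvd R M * g) n = g n := by
  rw [mul_apply, sum_eq_single_of_mem (1, n) (Nat.mem_divisorsAntidiagonal.2 ⟨one_mul n, hn⟩)]
  · simp [moebiusDvd_apply]
  rintro ⟨a, b⟩ hab hne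
  obtain ⟨rfl, -⟩ := Nat.mem_divisorsAntidiagonal.1 hab
  have ha : ¬ a ∣ M := fun haM => hne (by
    rw [Nat.eq_one_of_dvd_coprimes hnM (dvd_mul_right a b) haM, one_mul])
  simp [moebiusDvd_apply, ha]

theorem mul_moebiusDvd_mul_zeta_apply_of_primeFactors_subset (f : ArithmeticFunction R)
    {M n : ℕ} (hn : n ≠ 0) (hnM : n.primeFactors ⊆ M.primeFactors) :
    (f * (moebiusDvd R M * ζ)) n = f n := by
  rw [mul_apply, sum_eq_single_of_mem (n, 1) (Nat.mem_divisorsAntidiagonal.2 ⟨mul_one n, hn⟩)]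
  · simp [moebiusDvd_apply]
  rintro ⟨a, b⟩ hab hne
  obtain ⟨rfl, -⟩ := Nat.mem_divisorsAntidiagonal.1 hab
  have hb0 : b ≠ 0 := right_ne_zero_of_mul hn
  have hb : ¬ b.Coprime M := fun hbM => by
    have hempty : b.primeFactors = ∅ := Finset.disjoint_self_iff_empty _ |>.1 <|
      hbM.disjoint_primeFactors.mono_right
        ((Nat.primeFactors_mono (dvd_mul_left b a) hn).trans hnM)
    obtain rfl : b = 1 := (Nat.primeFactors_eq_empty.1 hempty).resolve_left hb0
    exact hne (by rw [mul_one])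
  simp [moebiusDvd_mul_zeta_apply hb0, hb]

end ArithmeticFunction

section SmoothPart

variable {k : ℕ}

theorem smoothPart_dvd {n : ℕ} (hn : n ≠ 0) : smoothPart k n ∣ n := by
  conv_rhs => rw [← Nat.prod_factorization_pow_eq_self hn]
  exact prod_dvd_prod_of_dvd _ _ fun p _ => by dsimp only; split_ifs <;> simp

theorem smoothPart_mul {m n : ℕ} (hm : m ≠ 0) (hn : n ≠ 0) :
    smoothPart k (m * n) = smoothPart k m * smoothPart k n := by
  rw [smoothPart, Nat.factorization_mul hm hn]
  exact Finsupp.prod_add_index' (fun p => by split_ifs <;> simp)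
    (fun p a b => by split_ifs <;> simp [pow_add])

theorem smoothPart_prime_pow {p : ℕ} (hp : p.Prime) (e : ℕ) :
    smoothPart k (p ^ e) = if p ≤ nthPrime k then p ^ e else 1 := by
  rw [smoothPart, hp.factorization_pow, Finsupp.prod_single_index (by split_ifs <;> simp)]

theorem Nat.Prime.coprime_smoothPart {p : ℕ} (hp : p.Prime) (hpk : nthPrime k < p) (n : ℕ) :
    p.Coprime (smoothPart k n) := by
  rw [smoothPart, Finsupp.prod]
  refine Nat.Coprime.prod_right fun q hq => ?_
  have hq' : q.Prime := Nat.prime_of_mem_primeFactors (n.support_factorization ▸ hq)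
  split_ifs with hqk
  · exact Nat.Coprime.pow_right _ ((Nat.coprime_primes hp hq').2 (by omega))
  · exact Nat.coprime_one_right p

end SmoothPart

noncomputable def smoothMoebius (k n : ℕ) : ℤ := if smoothPart k n = n then μ n else 0

theorem mobiusP_eq_two_mul_smoothMoebius_sub {k n : ℕ} (hn : n ≠ 0) :
    mobiusP k n = 2 * smoothMoebius k n - μ (smoothPart k n) := by
  have hs := smoothPart_dvd (k := k) hn
  have hdiv : n / smoothPart k n = 1 ↔ smoothPart k n = n := by
    rw [Nat.div_eq_iff_eq_mul_left (Nat.pos_of_dvd_of_pos hs (Nat.pos_of_ne_zero hn)) hs,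
      one_mul, eq_comm]
  rw [mobiusP, smoothMoebius]
  by_cases h : smoothPart k n = n
  · rw [if_pos (hdiv.2 h), if_pos h, h]
    ring
  · rw [if_neg (mt hdiv.1 h), if_neg h]
    ring

theorem dvd_primorial_of_smoothMoebius_ne_zero {k n : ℕ} (h : smoothMoebius k n ≠ 0) :
    n ∣ primorial (nthPrime k) := by
  rw [smoothMoebius] at h
  split_ifs at h with hs
  · rw [← Nat.prod_primeFactors_of_squarefree (moebius_ne_zero_iff_squarefree.1 h),
      Nat.prod_primeFactors_dvd_iff (primorial_ne_zero _), primeFactors_primorial]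
    intro p hp
    have hp' := Nat.prime_of_mem_primeFactors hp
    refine Nat.mem_primesLE.2 ⟨not_lt.1 fun hpk => hp'.one_lt.ne' ?_, hp'⟩
    exact (hs ▸ hp'.coprime_smoothPart hpk n).eq_one_of_dvd (Nat.dvd_of_mem_primeFactors hp)
  · exact absurd rfl h

namespace ArithmeticFunction

variable (R : Type*) [CommRing R]

-- `smoothPart k 0 = 1`, so the value at `0` has to be set separately.
noncomputable def moebiusSmoothPart (k : ℕ) : ArithmeticFunction R :=
  ⟨fun n => if n = 0 then 0 else (μ (smoothPart k n) : R), if_pos rfl⟩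

variable {R} {k : ℕ}

theorem moebiusSmoothPart_apply {n : ℕ} (hn : n ≠ 0) :
    moebiusSmoothPart R k n = μ (smoothPart k n) :=
  if_neg hn

theorem isMultiplicative_moebiusSmoothPart : (moebiusSmoothPart R k).IsMultiplicative := by
  refine ⟨by simp [moebiusSmoothPart_apply, smoothPart], fun {m n} hmn => ?_⟩
  rcases eq_or_ne m 0 with rfl | hm
  · simp [moebiusSmoothPart]
  rcases eq_or_ne n 0 with rfl | hn
  · simp [moebiusSmoothPart]
  rw [moebiusSmoothPart_apply (mul_ne_zero hm hn), moebiusSmoothPart_apply hm,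
    moebiusSmoothPart_apply hn, smoothPart_mul hm hn, ← Int.cast_mul]
  exact congrArg _ (isMultiplicative_moebius.map_mul_of_coprime
    ((hmn.coprime_dvd_left (smoothPart_dvd hm)).coprime_dvd_right (smoothPart_dvd hn)))

theorem moebiusSmoothPart_eq : moebiusSmoothPart R k =
    moebiusDvd R (primorial (nthPrime k)) * (moebiusDvd R (primorial (nthPrime k)) * ζ) := by
  rw [IsMultiplicative.eq_iff_eq_on_prime_powers _ isMultiplicative_moebiusSmoothPart _
    ((isMultiplicative_moebiusDvd _).mul
      ((isMultiplicative_moebiusDvd _).mul isMultiplicative_zeta.natCast))]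
  intro p e hp
  have hpe : p ^ e ≠ 0 := pow_ne_zero _ hp.ne_zero
  rw [moebiusSmoothPart_apply hpe, smoothPart_prime_pow hp]
  split_ifs with hpk
  · have hsub : (p ^ e).primeFactors ⊆ (primorial (nthPrime k)).primeFactors := by
      intro q hq
      have hq' := Nat.prime_of_mem_primeFactors hq
      obtain rfl := (Nat.prime_dvd_prime_iff_eq hq' hp).1
        (hq'.dvd_of_dvd_pow (Nat.dvd_of_mem_primeFactors hq))
      exact primeFactors_primorial _ ▸ Nat.mem_primesLE.2 ⟨hpk, hq'⟩
    rw [mul_moebiusDvd_mul_zeta_apply_of_primeFactors_subset _ hpe hsub,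
      moebiusDvd_apply_of_primeFactors_subset (primorial_ne_zero _) hsub]
  · have hcop : (p ^ e).Coprime (primorial (nthPrime k)) :=
      Nat.Coprime.pow_left _ (hp.coprime_iff_not_dvd.2 (mt hp.dvd_primorial_iff.1 hpk))
    rw [moebiusDvd_mul_apply_of_coprime _ hpe hcop, moebiusDvd_mul_zeta_apply hpe, if_pos hcop]
    simp

end ArithmeticFunction

theorem tendsto_nat_div_div_atTop {d : ℕ} (hd : 0 < d) :
    Tendsto (fun N : ℕ => ((N / d : ℕ) : ℝ) / N) atTop (𝓝 (1 / d)) := by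
  refine ((tendsto_nat_floor_mul_div_atTop (a := 1 / (d : ℝ)) (by positivity)).comp
    tendsto_natCast_atTop_atTop).congr fun N => ?_
  rw [Function.comp_apply, one_div, inv_mul_eq_div, Nat.floor_div_natCast, Nat.floor_natCast]

theorem tendsto_sum_Ioc_div_of_eq_zero {f : ℕ → ℝ} {M : ℕ} (hf : ∀ n, M < n → f n = 0) :
    Tendsto (fun N : ℕ => (∑ n ∈ Ioc 0 N, f n) / N) atTop (𝓝 0) := by
  refine (tendsto_const_div_atTop_nhds_zero_nat (∑ n ∈ Ioc 0 M, f n)).congr' ?_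
  filter_upwards [eventually_ge_atTop M] with N hN
  rw [sum_subset (Ioc_subset_Ioc_right hN) fun n hn hnM => hf n ?_]
  simp only [mem_Ioc, not_and, not_le] at hn hnM
  exact hnM hn.1

theorem tendsto_sum_smoothMoebius_div (k : ℕ) :
    Tendsto (fun N : ℕ => (∑ n ∈ Ioc 0 N, (smoothMoebius k n : ℝ)) / N) atTop (𝓝 0) :=
  tendsto_sum_Ioc_div_of_eq_zero (M := primorial (nthPrime k)) fun n hn => by
    by_contra h
    exact hn.not_ge (Nat.le_of_dvd (primorial_pos _)
      (dvd_primorial_of_smoothMoebius_ne_zero (by exact_mod_cast h)))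

theorem sum_divisors_moebius_div {K : Type*} [Field K] {M : ℕ} (hM : Squarefree M) :
    ∑ d ∈ M.divisors, (μ d : K) / d = ∏ p ∈ M.primeFactors, (1 - 1 / (p : K)) := by
  set f := pdiv (ζ : ArithmeticFunction K) (ArithmeticFunction.id : ArithmeticFunction ℕ)
  have hf : f.IsMultiplicative := isMultiplicative_zeta.natCast.pdiv isMultiplicative_id.natCast
  have hf_apply : ∀ n ≠ 0, f n = 1 / n := fun n hn => by
    rw [pdiv_apply, natCoe_apply, natCoe_apply, zeta_apply_ne hn, id_apply, Nat.cast_one]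
  calc ∑ d ∈ M.divisors, (μ d : K) / d = ∑ d ∈ M.divisors, μ d * f d :=
        sum_congr rfl fun d hd => by rw [hf_apply d (Nat.pos_of_mem_divisors hd).ne', mul_one_div]
    _ = ∏ p ∈ M.primeFactors, (1 - f p) := (hf.prodPrimeFactors_one_sub_of_squarefree _ hM).symm
    _ = ∏ p ∈ M.primeFactors, (1 - 1 / (p : K)) :=
        prod_congr rfl fun p hp => by rw [hf_apply p (Nat.pos_of_mem_primeFactors hp).ne']

theorem tendsto_sum_moebiusSmoothPart_div (k : ℕ) :
    Tendsto (fun N : ℕ => (∑ n ∈ Ioc 0 N, moebiusSmoothPart ℝ k n) / N) atTop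
      (𝓝 ((∑ a ∈ (primorial (nthPrime k)).divisors, (μ a : ℝ) / a) ^ 2)) := by
  have hconv := moebiusSmoothPart_eq (R := ℝ) (k := k)
  have hP : primorial (nthPrime k) ≠ 0 := primorial_ne_zero _
  set P := primorial (nthPrime k)
  have hsupp : ∀ a, moebiusDvd ℝ P a ≠ 0 → a ∣ P := fun a ha => by
    by_contra h
    simp [moebiusDvd_apply, h] at ha
  have hzeta : ∀ X, ∑ m ∈ Ioc 0 X, (ζ : ArithmeticFunction ℝ) m = X := fun X => by
    simp_rw [natCoe_apply]
    exact_mod_cast sum_Ioc_zeta X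
  have hsum : ∀ N : ℕ, (∑ n ∈ Ioc 0 N, moebiusSmoothPart ℝ k n) / N =
      ∑ a ∈ P.divisors, ∑ b ∈ P.divisors, (μ a : ℝ) * μ b * (((N / (a * b) : ℕ) : ℝ) / N) := by
    intro N
    simp_rw [hconv, sum_Ioc_mul_eq_sum_divisors hP hsupp, hzeta, mul_sum, sum_div]
    refine sum_congr rfl fun a ha => sum_congr rfl fun b hb => ?_
    rw [moebiusDvd_apply, moebiusDvd_apply, if_pos (Nat.dvd_of_mem_divisors ha),
      if_pos (Nat.dvd_of_mem_divisors hb), Nat.div_div_eq_div_mul]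
    ring
  have hlimit : (∑ a ∈ P.divisors, (μ a : ℝ) / a) ^ 2 =
      ∑ a ∈ P.divisors, ∑ b ∈ P.divisors, (μ a : ℝ) * μ b * (1 / ((a * b : ℕ) : ℝ)) := by
    rw [sq, sum_mul_sum]
    refine sum_congr rfl fun a _ => sum_congr rfl fun b _ => ?_
    push_cast
    ring
  rw [hlimit]
  simp_rw [hsum]
  exact tendsto_finsetSum _ fun a ha => tendsto_finsetSum _ fun b hb =>
    (tendsto_nat_div_div_atTop (Nat.mul_pos (Nat.pos_of_mem_divisors ha)
      (Nat.pos_of_mem_divisors hb))).const_mul _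

theorem prod_primesLE_nthPrime {M : Type*} [CommMonoid M] (f : ℕ → M) {k : ℕ} (hk : 1 ≤ k) :
    ∏ p ∈ Nat.primesLE (nthPrime k), f p = ∏ i ∈ Icc 1 k, f (nthPrime i) := by
  have himage : Nat.primesLE (nthPrime k) = (Icc 1 k).image nthPrime := by
    ext p
    simp only [Nat.mem_primesLE, mem_image, mem_Icc, nthPrime]
    constructor
    · rintro ⟨hle, hp⟩
      have := (Nat.count_le_iff_le_nth (p := Nat.Prime) Nat.infinite_setOfPred_prime).2 hle
      exact ⟨Nat.count Nat.Prime p + 1, ⟨by omega, by omega⟩, by simpa using Nat.nth_count hp⟩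
    · rintro ⟨i, ⟨hi, hik⟩, rfl⟩
      exact ⟨(Nat.nth_le_nth Nat.infinite_setOfPred_prime).2 (by omega), Nat.prime_nth_prime _⟩
  rw [himage, prod_image fun i hi j hj hij => ?_]
  have := Nat.nth_injective Nat.infinite_setOfPred_prime hij
  simp only [coe_Icc, Set.mem_Icc] at hi hj
  omega

/-- The averages `(1/n)·∑_{j=1}^{n} μ̃_k(j)` converge to `-∏_{i=1}^{k} (1 - 1/p_i)²`. -/
theorem mobiusP_average_tendsto (k : ℕ) (hk : 1 ≤ k) :
    Tendsto (fun n : ℕ => (∑ j ∈ Finset.Icc 1 n, (mobiusP k j : ℝ)) / n) atTop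
      (nhds (-∏ i ∈ Finset.Icc 1 k, (1 - 1 / (nthPrime i : ℝ)) ^ 2)) := by
  have hsplit : ∀ N : ℕ, (∑ j ∈ Icc 1 N, (mobiusP k j : ℝ)) / N =
      2 * ((∑ n ∈ Ioc 0 N, (smoothMoebius k n : ℝ)) / N) -
        (∑ n ∈ Ioc 0 N, moebiusSmoothPart ℝ k n) / N := by
    intro N
    rw [mul_div_assoc', ← sub_div, mul_sum, ← sum_sub_distrib]
    refine congrArg (· / (N : ℝ)) (sum_congr rfl fun n hn => ?_)
    have hn0 : n ≠ 0 := (mem_Ioc.1 hn).1.ne'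
    rw [mobiusP_eq_two_mul_smoothMoebius_sub hn0, moebiusSmoothPart_apply hn0]
    push_cast
    ring
  have hlim := ((tendsto_sum_smoothMoebius_div k).const_mul 2).sub
    (tendsto_sum_moebiusSmoothPart_div k)
  rw [sum_divisors_moebius_div (squarefree_primorial _), primeFactors_primorial,
    prod_primesLE_nthPrime _ hk, mul_zero, zero_sub, ← prod_pow] at hlim
  exact hlim.congr fun N => (hsplit N).symm
end

section
/- Fix k ≥ 1 and let p_1 < p_2 < ... denote the primes in increasing order. For every positive integer n with n < p_{k+1}², one has μ̃_k(n) = μ(n). -/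
open ArithmeticFunction Finset Filter

lemma roughPart_mul (k n : ℕ) (hn : n ≠ 0) :
    smoothPart k n * (n.factorization.prod fun p e => if p ≤ nthPrime k then 1 else p ^ e) = n := by
  unfold smoothPart
  rw [Finsupp.prod, Finsupp.prod, ← Finset.prod_mul_distrib]
  conv_rhs => rw [← Nat.factorization_prod_pow_eq_self hn, Finsupp.prod]
  refine Finset.prod_congr rfl fun p hp => ?_
  split <;> ring

lemma prime_dvd_smooth {k n q : ℕ} (hq : q.Prime) (hdvd : q ∣ smoothPart k n) :
    q ≤ nthPrime k := by
  unfold smoothPart at hdvd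
  rw [Finsupp.prod] at hdvd
  obtain ⟨p, hp, hqp⟩ := hq.prime.exists_mem_finset_dvd hdvd
  have hp' : p.Prime :=
    Nat.prime_of_mem_primeFactors (by rwa [Nat.support_factorization] at hp)
  split at hqp
  · next h =>
    have := (Nat.prime_dvd_prime_iff_eq hq hp').mp (hq.prime.dvd_of_dvd_pow hqp)
    omega
  · have := Nat.le_of_dvd one_pos hqp
    have := hq.two_le
    omega

lemma prime_dvd_rough {k n q : ℕ} (hq : q.Prime)
    (hdvd : q ∣ n.factorization.prod fun p e => if p ≤ nthPrime k then 1 else p ^ e) :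
    nthPrime k < q := by
  rw [Finsupp.prod] at hdvd
  obtain ⟨p, hp, hqp⟩ := hq.prime.exists_mem_finset_dvd hdvd
  have hp' : p.Prime :=
    Nat.prime_of_mem_primeFactors (by rwa [Nat.support_factorization] at hp)
  split at hqp
  · have := Nat.le_of_dvd one_pos hqp
    have := hq.two_le
    omega
  · next h =>
    have := (Nat.prime_dvd_prime_iff_eq hq hp').mp (hq.prime.dvd_of_dvd_pow hqp)
    omega

lemma nth_prime_le {k q : ℕ} (hq : q.Prime) (hgt : nthPrime k < q) : nthPrime (k + 1) ≤ q := by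
  have hinf := Nat.infinite_setOf_prime
  have hc : Nat.nth Nat.Prime (Nat.count Nat.Prime q) = q := Nat.nth_count hq
  have h1 : k - 1 < Nat.count Nat.Prime q := by
    rw [← Nat.nth_lt_nth hinf, hc]; exact hgt
  have h2 : Nat.nth Nat.Prime ((k + 1) - 1) ≤ Nat.nth Nat.Prime (Nat.count Nat.Prime q) := by
    rw [Nat.nth_le_nth hinf]; omega
  rw [hc] at h2
  exact h2

/-- For every positive integer `n` with `n < p_{k+1}²`, one has `μ̃_k(n) = μ(n)`. -/
theorem mobiusP_eq_moebius_of_lt_sq (k : ℕ) (hk : 1 ≤ k) (n : ℕ) (hn : 1 ≤ n)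
    (h : n < (nthPrime (k + 1)) ^ 2) :
    mobiusP k n = moebius n := by
  have hn0 : n ≠ 0 := by omega
  set s := smoothPart k n with hs
  set t := n.factorization.prod fun p e => if p ≤ nthPrime k then 1 else p ^ e with ht
  have hst : s * t = n := roughPart_mul k n hn0
  have hs0 : 0 < s := Nat.pos_of_ne_zero fun h0 => hn0 (by rw [← hst, h0, zero_mul])
  have ht0 : 0 < t := by
    rcases Nat.eq_zero_or_pos t with h0 | h0
    · rw [h0, mul_zero] at hst; omega
    · exact h0
  have hdiv : n / s = t := by
    rw [← hst, Nat.mul_div_cancel_left _ hs0]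
  by_cases ht1 : t = 1
  · rw [ht1, mul_one] at hst
    unfold mobiusP
    rw [← hs, hdiv, ht1, if_pos rfl, hst]
  · -- t > 1; its minimal prime factor
    have hq : t.minFac.Prime := Nat.minFac_prime ht1
    have hqt : t.minFac ∣ t := Nat.minFac_dvd t
    have hqk : nthPrime k < t.minFac := prime_dvd_rough hq (hqt.trans dvd_rfl)
    have hq1 : nthPrime (k + 1) ≤ t.minFac := nth_prime_le hq hqk
    -- show t = t.minFac
    set r := t / t.minFac with hr
    have hrt : t.minFac * r = t := Nat.mul_div_cancel' hqt
    have hr1 : r = 1 := by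
      by_contra hr1
      have hr0 : 0 < r := by
        rcases Nat.eq_zero_or_pos r with h0 | h0
        · rw [h0, mul_zero] at hrt; omega
        · exact h0
      have hq' : r.minFac.Prime := Nat.minFac_prime hr1
      have hq'r : r.minFac ∣ t := (Nat.minFac_dvd r).trans (Dvd.intro_left _ hrt)
      have hq'k : nthPrime k < r.minFac := prime_dvd_rough hq' hq'r
      have hq'1 : nthPrime (k + 1) ≤ r.minFac := nth_prime_le hq' hq'k
      have hrge : r.minFac ≤ r := Nat.minFac_le hr0
      have htn : t ≤ n := Nat.le_of_dvd (by omega) (Dvd.intro_left s hst)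
      have hmul2 : nthPrime (k + 1) * nthPrime (k + 1) ≤ t.minFac * r :=
        Nat.mul_le_mul hq1 (le_trans hq'1 hrge)
      rw [pow_two] at h
      omega
    rw [hr1, mul_one] at hrt
    -- now t is prime
    have htp : t.Prime := hrt ▸ hq
    have hcop : Nat.Coprime s t := by
      rw [Nat.coprime_comm]
      exact (Nat.Prime.coprime_iff_not_dvd htp).mpr fun hd =>
        absurd (prime_dvd_smooth htp hd) (by omega)
    have hmul : (moebius (s * t) : ℤ) = moebius s * moebius t :=
      isMultiplicative_moebius.map_mul_of_coprime hcop
    unfold mobiusP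
    rw [← hs, hdiv, if_neg ht1, ← hst, hmul, moebius_apply_prime htp]
    ring
end

section
/- If π(n) denotes the number of primes not exceeding n, then π(n)/n tends to 0 as n → ∞ (the primes have asymptotic density zero). -/
open Filter Real

/-- The primes have asymptotic density zero: `π(n)/n → 0` as `n → ∞`. -/
theorem primeCounting_density_zero :
    Tendsto (fun n : ℕ => (Nat.primeCounting n : ℝ) / n) atTop (nhds 0) := by
  have chebyshev : ∀ᶠ n : ℕ in atTop, (Nat.primeCounting n : ℝ) ≤ (log 4 + 1) * n / log n := by
    simpa using tendsto_natCast_atTop_atTop.eventually (Chebyshev.eventually_primeCounting_le one_pos)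
  have hlog : Tendsto (fun n : ℕ => (log 4 + 1) / log n) atTop (nhds 0) :=
    tendsto_const_nhds.div_atTop (tendsto_log_atTop.comp tendsto_natCast_atTop_atTop)
  refine squeeze_zero' (Eventually.of_forall fun n => by positivity) ?_ hlog
  filter_upwards [chebyshev, eventually_gt_atTop 0] with n hπ hn
  rw [div_le_iff₀ (by exact_mod_cast hn)]
  calc (Nat.primeCounting n : ℝ) ≤ (log 4 + 1) * n / log n := hπ
    _ = (log 4 + 1) / log n * n := by ring
end

section
/- Let p_1 < p_2 < ... denote the primes in increasing order. Then the partial products ∏_{i=1}^{k} (1 - 1/p_i) tend to 0 as k → ∞. -/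
/-!
Since `1 - x ≤ exp (-x)`, the partial product is at most `exp (-∑_{i ≤ k} 1/p_i)`, and the sum
of the reciprocals of the primes diverges.
-/

open Finset Filter

lemma Finset.prod_one_sub_le_exp_neg_sum {ι : Type*} (s : Finset ι) {f : ι → ℝ}
    (hf : ∀ i ∈ s, f i ≤ 1) : ∏ i ∈ s, (1 - f i) ≤ Real.exp (-∑ i ∈ s, f i) := by
  rw [← sum_neg_distrib, Real.exp_sum]
  exact prod_le_prod (fun i hi ↦ sub_nonneg.2 (hf i hi)) fun i _ ↦ Real.one_sub_le_exp_neg _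

lemma tendsto_prod_range_one_sub_zero_of_not_summable {f : ℕ → ℝ} (hf₀ : ∀ i, 0 ≤ f i)
    (hf₁ : ∀ i, f i ≤ 1) (hf : ¬Summable f) :
    Tendsto (fun n ↦ ∏ i ∈ range n, (1 - f i)) atTop (nhds 0) := by
  have hsum : Tendsto (fun n ↦ ∑ i ∈ range n, f i) atTop atTop :=
    (not_summable_iff_tendsto_nat_atTop_of_nonneg hf₀).1 hf
  have hexp : Tendsto (fun n ↦ Real.exp (-∑ i ∈ range n, f i)) atTop (nhds 0) :=
    Real.tendsto_exp_atBot.comp (tendsto_neg_atTop_atBot.comp hsum)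
  exact tendsto_of_tendsto_of_tendsto_of_le_of_le tendsto_const_nhds hexp
    (fun n ↦ prod_nonneg fun i _ ↦ sub_nonneg.2 (hf₁ i))
    (fun n ↦ (range n).prod_one_sub_le_exp_neg_sum fun i _ ↦ hf₁ i)

lemma Nat.not_summable_one_div_nth_prime :
    ¬Summable (fun n : ℕ ↦ (1 / Nat.nth Nat.Prime n : ℝ)) := by
  have hcomp : (fun n : ℕ ↦ (1 / Nat.nth Nat.Prime n : ℝ)) =
      Set.indicator {p | p.Prime} (fun n : ℕ ↦ (1 / n : ℝ)) ∘ Nat.nth Nat.Prime := by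
    ext n
    simp [Nat.prime_nth_prime n]
  rw [hcomp, (Nat.nth_injective Nat.infinite_setOfPred_prime).summable_iff]
  · exact not_summable_one_div_on_primes
  · intro n hn
    rw [Nat.range_nth_of_infinite Nat.infinite_setOfPred_prime] at hn
    exact Set.indicator_of_notMem hn _

lemma prod_Icc_one_nthPrime_eq_prod_range {M : Type*} [CommMonoid M] (g : ℕ → M) (k : ℕ) :
    ∏ i ∈ Icc 1 k, g (nthPrime i) = ∏ i ∈ range k, g (Nat.nth Nat.Prime i) := by
  rw [← Ico_add_one_right_eq_Icc, prod_Ico_eq_prod_range]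
  simp [nthPrime]

/-- The partial products `∏_{i=1}^{k} (1 - 1/p_i)` tend to `0` as `k → ∞`. -/
theorem prod_one_sub_inv_primes_tendsto_zero :
    Tendsto (fun k : ℕ => ∏ i ∈ Finset.Icc 1 k, (1 - 1 / (nthPrime i : ℝ))) atTop (nhds 0) := by
  simp_rw [prod_Icc_one_nthPrime_eq_prod_range (fun p : ℕ ↦ 1 - 1 / (p : ℝ))]
  refine tendsto_prod_range_one_sub_zero_of_not_summable (fun n ↦ by positivity) (fun n ↦ ?_)
    Nat.not_summable_one_div_nth_prime
  exact div_le_one_of_le₀ (by exact_mod_cast (Nat.prime_nth_prime n).one_le) (by positivity)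
end

section
/- Fix k ≥ 1 and let p_1 < p_2 < ... denote the primes in increasing order. Define H(n) = ∑_{m=1}^{n} 1/m and H_k(n) = ∑_{m=1, gcd(m, p_1·p_2·...·p_k)=1}^{n} 1/m (the harmonic sum restricted to integers coprime to the first k primes). Then H_k(n)/H(n) converges, as n → ∞, to ∏_{i=1}^{k} (1 - 1/p_i). -/
/-!
Let `S_Q(n)` be the sum of `1/m` over `m ≤ n` coprime to `Q`. Sieving out one more prime
`p ∤ Q` removes exactly the terms `1/(p m)` with `m ≤ n/p` coprime to `Q`, so
`S_{pQ}(n) = S_Q(n) - S_Q(⌊n/p⌋)/p`.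
Since `H(n) - H(⌊n/p⌋) ≤ p`, induction on the set of sifted primes shows that
`S_Q(n) - ∏_{q ∣ Q} (1 - 1/q) H(n)` stays bounded, and `H(n) → ∞` turns this into the limit.
-/

open Finset Filter

open Asymptotics Topology

noncomputable def harmonicSum (n : ℕ) : ℝ := ∑ m ∈ Icc 1 n, (1 : ℝ) / m

noncomputable def coprimeHarmonicSum (Q n : ℕ) : ℝ :=
  ∑ m ∈ (Icc 1 n).filter (Nat.Coprime · Q), (1 : ℝ) / m

theorem tendsto_harmonicSum_atTop : Tendsto harmonicSum atTop atTop := by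
  convert Real.tendsto_sum_range_one_div_nat_succ_atTop using 2 with n
  rw [harmonicSum, ← Ico_add_one_right_eq_Icc, sum_Ico_eq_sum_range, add_tsub_cancel_right]
  push_cast
  simp only [add_comm]

theorem harmonicSum_add_sum_Ioc {a b : ℕ} (hab : a ≤ b) :
    harmonicSum a + ∑ m ∈ Ioc a b, (1 : ℝ) / m = harmonicSum b := by
  simp only [harmonicSum, show ∀ c, Icc 1 c = Ioc 0 c from Icc_add_one_left_eq_Ioc 0]
  exact sum_Ioc_consecutive _ (Nat.zero_le a) hab

theorem sum_one_div_Ioc_div_le {p : ℕ} (hp : 0 < p) (n : ℕ) :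
    ∑ m ∈ Ioc (n / p) n, (1 : ℝ) / m ≤ p := by
  have hn : n < (n / p + 1) * p := (Nat.div_lt_iff_lt_mul hp).mp (Nat.lt_succ_self _)
  calc ∑ m ∈ Ioc (n / p) n, (1 : ℝ) / m ≤ #(Ioc (n / p) n) • (1 / ((n / p : ℕ) + 1 : ℝ)) := by
        refine sum_le_card_nsmul _ _ _ fun m hm => ?_
        gcongr
        exact_mod_cast (mem_Ioc.mp hm).1
    _ ≤ n * (1 / ((n / p : ℕ) + 1 : ℝ)) := by
        rw [Nat.card_Ioc, nsmul_eq_mul]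
        gcongr
        exact_mod_cast Nat.sub_le n (n / p)
    _ ≤ p := by
        rw [mul_one_div, div_le_iff₀ (by positivity)]
        calc (n : ℝ) ≤ ((n / p + 1) * p : ℕ) := by exact_mod_cast hn.le
          _ = p * ((n / p : ℕ) + 1) := by push_cast; ring

theorem isBigO_harmonicSum_sub_harmonicSum_div {p : ℕ} (hp : 0 < p) :
    (fun n => harmonicSum n - harmonicSum (n / p)) =O[atTop] fun _ => (1 : ℝ) := by
  refine IsBigO.of_bound p (Eventually.of_forall fun n => ?_)
  rw [← harmonicSum_add_sum_Ioc (Nat.div_le_self n p), add_sub_cancel_left, norm_one, mul_one,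
    Real.norm_of_nonneg (sum_nonneg fun m _ => by positivity)]
  exact sum_one_div_Ioc_div_le hp n

theorem filter_coprime_filter_dvd_eq_image {p Q : ℕ} (hp : p.Prime) (hpQ : p.Coprime Q) (n : ℕ) :
    ((Icc 1 n).filter (Nat.Coprime · Q)).filter (p ∣ ·) =
      ((Icc 1 (n / p)).filter (Nat.Coprime · Q)).image (p * ·) := by
  ext m
  simp only [mem_filter, mem_Icc, mem_image]
  constructor
  · rintro ⟨⟨⟨hm, hmn⟩, hmQ⟩, j, rfl⟩
    refine ⟨j, ⟨⟨Nat.pos_of_mul_pos_left hm, ?_⟩,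
      Nat.Coprime.coprime_dvd_left (dvd_mul_left j p) hmQ⟩, rfl⟩
    rw [Nat.le_div_iff_mul_le hp.pos, mul_comm]
    exact hmn
  · rintro ⟨j, ⟨⟨hj, hjn⟩, hjQ⟩, rfl⟩
    refine ⟨⟨⟨Nat.mul_pos hp.pos hj, ?_⟩, Nat.Coprime.mul_left hpQ hjQ⟩, dvd_mul_right p j⟩
    rw [mul_comm]
    exact (Nat.le_div_iff_mul_le hp.pos).mp hjn

theorem coprimeHarmonicSum_prime_mul {p Q : ℕ} (hp : p.Prime) (hpQ : p.Coprime Q) (n : ℕ) :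
    coprimeHarmonicSum (p * Q) n =
      coprimeHarmonicSum Q n - 1 / p * coprimeHarmonicSum Q (n / p) := by
  have hsplit := sum_filter_add_sum_filter_not ((Icc 1 n).filter (Nat.Coprime · Q)) (p ∣ ·)
    fun m => (1 : ℝ) / m
  have hnot : ((Icc 1 n).filter (Nat.Coprime · Q)).filter (¬ p ∣ ·) =
      (Icc 1 n).filter (Nat.Coprime · (p * Q)) := by
    rw [filter_filter]
    refine filter_congr fun m _ => ?_
    rw [Nat.coprime_mul_iff_right, Nat.coprime_comm.trans hp.coprime_iff_not_dvd, and_comm]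
  rw [filter_coprime_filter_dvd_eq_image hp hpQ,
    sum_image fun _ _ _ _ h => Nat.eq_of_mul_eq_mul_left hp.pos h, hnot] at hsplit
  simp only [coprimeHarmonicSum, ← hsplit, mul_sum, Nat.cast_mul, one_div_mul_one_div]
  ring

theorem isBigO_coprimeHarmonicSum_prod_sub {s : Finset ℕ} (hs : ∀ q ∈ s, q.Prime) :
    (fun n => coprimeHarmonicSum (∏ q ∈ s, q) n - (∏ q ∈ s, (1 - 1 / (q : ℝ))) * harmonicSum n)
      =O[atTop] fun _ => (1 : ℝ) := by
  induction s using Finset.induction_on with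
  | empty =>
    refine (isBigO_zero _ _).congr_left fun n => ?_
    simp [coprimeHarmonicSum, harmonicSum]
  | insert p s hps ih =>
    have hp := hs p (mem_insert_self p s)
    have hpQ : p.Coprime (∏ q ∈ s, q) := Nat.Coprime.prod_right fun q hq =>
      (Nat.coprime_primes hp (hs q (mem_insert_of_mem hq))).mpr (ne_of_mem_of_not_mem hq hps).symm
    replace ih := ih fun q hq => hs q (mem_insert_of_mem hq)
    set Q := ∏ q ∈ s, q
    set c := ∏ q ∈ s, (1 - 1 / (q : ℝ))
    have hrec : ∀ n, coprimeHarmonicSum (∏ q ∈ insert p s, q) n -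
          (∏ q ∈ insert p s, (1 - 1 / (q : ℝ))) * harmonicSum n =
        (coprimeHarmonicSum Q n - c * harmonicSum n) -
          1 / p * (coprimeHarmonicSum Q (n / p) - c * harmonicSum (n / p)) +
          c / p * (harmonicSum n - harmonicSum (n / p)) := fun n => by
      rw [prod_insert hps, prod_insert hps, coprimeHarmonicSum_prime_mul hp hpQ]
      ring
    simp only [hrec]
    exact (ih.sub ((ih.comp_tendsto (Nat.tendsto_div_const_atTop hp.ne_zero)).const_mul_left _)).add
      ((isBigO_harmonicSum_sub_harmonicSum_div hp.pos).const_mul_left _)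

theorem tendsto_div_of_isBigO_sub_mul {α : Type*} {l : Filter α} {g h : α → ℝ} {c : ℝ}
    (hgh : (fun x => g x - c * h x) =O[l] fun _ => (1 : ℝ)) (hh : Tendsto h l atTop) :
    Tendsto (fun x => g x / h x) l (𝓝 c) := by
  have hsmall : (fun x => g x - c * h x) =o[l] h :=
    hgh.trans_isLittleO ((isLittleO_one_left_iff ℝ).mpr (tendsto_norm_atTop_atTop.comp hh))
  refine (hsmall.tendsto_div_nhds_zero.add_const c).congr' ?_ |>.mono_right (by rw [zero_add])
  filter_upwards [hh.eventually_gt_atTop 0] with x hx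
  field_simp
  ring

open Classical in
theorem sifted_harmonic_ratio_tendsto_general (k : ℕ) :
    Tendsto (fun n : ℕ =>
        (∑ m ∈ (Finset.Icc 1 n).filter
            (fun m => Nat.Coprime m (∏ i ∈ Finset.Icc 1 k, nthPrime i)), (1 : ℝ) / m) /
          (∑ m ∈ Finset.Icc 1 n, (1 : ℝ) / m)) atTop
      (nhds (∏ i ∈ Finset.Icc 1 k, (1 - 1 / (nthPrime i : ℝ)))) := by
  have hinj : Set.InjOn nthPrime (Icc 1 k) := fun i hi j hj hij => by
    simp only [coe_Icc, Set.mem_Icc] at hi hj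
    have := Nat.nth_injective Nat.infinite_setOfPred_prime hij
    omega
  have hprime : ∀ q ∈ (Icc 1 k).image nthPrime, q.Prime := by
    simp only [mem_image]
    rintro _ ⟨i, -, rfl⟩
    exact Nat.prime_nth_prime _
  have key := isBigO_coprimeHarmonicSum_prod_sub hprime
  rw [prod_image hinj, prod_image hinj] at key
  exact tendsto_div_of_isBigO_sub_mul key tendsto_harmonicSum_atTop

open Classical in
/-- The ratio of the harmonic sum restricted to integers coprime to the first `k` primes to the
full harmonic sum converges to `∏_{i=1}^{k} (1 - 1/p_i)`. -/
theorem sifted_harmonic_ratio_tendsto (k : ℕ) (hk : 1 ≤ k) :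
    Tendsto (fun n : ℕ =>
        (∑ m ∈ (Finset.Icc 1 n).filter
            (fun m => Nat.Coprime m (∏ i ∈ Finset.Icc 1 k, nthPrime i)), (1 : ℝ) / m) /
          (∑ m ∈ Finset.Icc 1 n, (1 : ℝ) / m)) atTop
      (nhds (∏ i ∈ Finset.Icc 1 k, (1 - 1 / (nthPrime i : ℝ)))) :=
  sifted_harmonic_ratio_tendsto_general k
end

section
/- The statement M(n)/n → 0 as n → ∞ is equivalent to the statement that the partial sums ∑_{i=1}^{n} μ(i)/i converge to 0 as n → ∞, where M(n) = ∑_{k=1}^{n} μ(k) is the Mertens function. -/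
/-!
Write `m(x) = ∑_{n ≤ x} μ(n)/n`. Abel summation gives `M(N) = N m(N) - ∑_{i < N} m(i)`, so
`m → 0` implies `M(N)/N → 0` by Cesàro.

Conversely, for `N = QK` the identity `∑_{j ≤ N} M(⌊N/j⌋) = 1` (from `ζ * μ = 1`), regrouped
according to whether `⌊N/j⌋ ≥ Q`, gives `∑_{n ≤ Q} μ(n) ⌊N/n⌋ = 1 + ∑_{j < K} (M(Q) - M(⌊N/j⌋))`.
Replacing `⌊N/n⌋` by `N/n` costs at most `Q`, so `|m(Q)| ≤ 2/K + 2K sup_{t ≥ Q} |M(t)|/t`;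
let `Q → ∞` and then `K → ∞`.
-/

open ArithmeticFunction Finset Filter

open scoped ArithmeticFunction.Moebius ArithmeticFunction.zeta

def mertens (n : ℕ) : ℤ := ∑ k ∈ Icc 1 n, μ k

noncomputable def sumMoebiusDiv (n : ℕ) : ℝ := ∑ k ∈ Icc 1 n, (μ k : ℝ) / k

theorem sum_Icc_div_nsmul_eq_sum_Icc_min {M : Type*} [AddCommMonoid M] (f : ℕ → M) (Q N : ℕ) :
    ∑ n ∈ Icc 1 Q, (N / n) • f n = ∑ j ∈ Icc 1 N, ∑ n ∈ Icc 1 (min Q (N / j)), f n := by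
  have hcount (n : ℕ) : (N / n) • f n = ∑ _j ∈ Icc 1 (N / n), f n := by simp
  simp_rw [hcount]
  refine sum_comm' fun n j ↦ ?_
  simp only [mem_Icc, le_min_iff]
  constructor
  · rintro ⟨⟨hn, hnQ⟩, hj, hjN⟩
    have := (Nat.le_div_iff_mul_le hn).1 hjN
    refine ⟨⟨hn, hnQ, (Nat.le_div_iff_mul_le hj).2 (by linarith)⟩, hj, ?_⟩
    nlinarith
  · rintro ⟨⟨hn, hnQ, hnN⟩, hj, hjN⟩
    have := (Nat.le_div_iff_mul_le hj).1 hnN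
    exact ⟨⟨hn, hnQ⟩, hj, (Nat.le_div_iff_mul_le hn).2 (by linarith)⟩

theorem sum_mertens_div_eq_one {N : ℕ} (hN : 1 ≤ N) : ∑ j ∈ Icc 1 N, mertens (N / j) = 1 :=
  calc ∑ j ∈ Icc 1 N, mertens (N / j)
      = ∑ j ∈ Ioc 0 N, (ζ : ArithmeticFunction ℤ) j * ∑ m ∈ Ioc 0 (N / j), μ m :=
        sum_congr rfl fun j hj ↦ by
          rw [natCoe_apply, zeta_apply, if_neg (mem_Ioc.1 hj).1.ne', Nat.cast_one, one_mul]
          rfl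
    _ = ∑ n ∈ Ioc 0 N, (ζ * μ : ArithmeticFunction ℤ) n := (sum_Ioc_mul_eq_sum_sum _ _ _).symm
    _ = 1 := by simp [coe_zeta_mul_moebius, one_apply, hN]

theorem sum_moebius_mul_div_eq {Q K : ℕ} (hQ : 1 ≤ Q) (hK : 1 ≤ K) :
    ∑ n ∈ Icc 1 Q, μ n * (Q * K / n : ℕ) =
      1 + ∑ j ∈ Ico 1 K, (mertens Q - mertens (Q * K / j)) := by
  have hswap := sum_Icc_div_nsmul_eq_sum_Icc_min (fun n ↦ μ n) Q (Q * K)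
  simp only [nsmul_eq_mul] at hswap
  change _ = ∑ j ∈ Icc 1 (Q * K), mertens (min Q (Q * K / j)) at hswap
  have hsplit : ∑ j ∈ Icc 1 (Q * K), mertens (min Q (Q * K / j)) =
      ∑ j ∈ Icc 1 (Q * K), mertens (Q * K / j) +
        ∑ j ∈ Icc 1 (Q * K), (mertens (min Q (Q * K / j)) - mertens (Q * K / j)) := by
    rw [← sum_add_distrib]; simp only [add_sub_cancel]
  have hsmall : ∑ j ∈ Icc 1 (Q * K), (mertens (min Q (Q * K / j)) - mertens (Q * K / j)) =
      ∑ j ∈ Ico 1 K, (mertens Q - mertens (Q * K / j)) := by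
    have hsub : Ico 1 K ⊆ Icc 1 (Q * K) := fun j hj ↦ by
      simp only [mem_Ico, mem_Icc] at hj ⊢
      exact ⟨hj.1, hj.2.le.trans (Nat.le_mul_of_pos_left K hQ)⟩
    rw [← sum_subset hsub fun j hj hjK ↦ ?_]
    · refine sum_congr rfl fun j hj ↦ ?_
      obtain ⟨hj1, hjK⟩ := mem_Ico.1 hj
      rw [min_eq_left ((Nat.le_div_iff_mul_le hj1).2 (Nat.mul_le_mul_left Q hjK.le))]
    · simp only [mem_Ico, mem_Icc, not_and, not_lt] at hj hjK
      have hle : Q * K / j ≤ Q :=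
        (Nat.div_le_div_left (hjK hj.1) hK).trans (Nat.mul_div_cancel Q hK).le
      rw [min_eq_right hle, sub_self]
  simp_rw [mul_comm (μ _ : ℤ)]
  rw [hswap, hsplit, sum_mertens_div_eq_one (Nat.one_le_iff_ne_zero.2 (by positivity)), hsmall]

theorem abs_natCast_div_sub_natCast_div_le_one {K : Type*} [Field K] [LinearOrder K]
    [IsStrictOrderedRing K] [FloorSemiring K] (m n : ℕ) :
    |(m : K) / n - (m / n : ℕ)| ≤ 1 := by
  rw [← Nat.floor_div_eq_div (K := K), abs_le]
  have hfloor := Nat.floor_le (a := (m : K) / n) (by positivity)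
  have hlt := Nat.lt_floor_add_one ((m : K) / n)
  constructor <;> linarith

theorem abs_sum_moebius_mul_div_sub_div_le (N Q : ℕ) :
    |∑ n ∈ Icc 1 Q, (μ n : ℝ) * ((N : ℝ) / n - (N / n : ℕ))| ≤ Q := by
  refine (abs_sum_le_sum_abs _ _).trans ((sum_le_card_nsmul _ _ 1 fun n _ ↦ ?_).trans_eq (by simp))
  rw [abs_mul]
  exact mul_le_one₀ (by exact_mod_cast abs_moebius_le_one) (abs_nonneg _)
    (abs_natCast_div_sub_natCast_div_le_one N n)

theorem abs_sum_mertens_sub_le {Q K : ℕ} {ε : ℝ} (hε : 0 ≤ ε)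
    (hM : ∀ t, Q ≤ t → |(mertens t : ℝ)| ≤ ε * t) :
    |∑ j ∈ Ico 1 K, ((mertens Q : ℝ) - mertens (Q * K / j))| ≤ 2 * K * ε * (Q * K : ℕ) := by
  have hterm (j : ℕ) (hj : j ∈ Ico 1 K) :
      |(mertens Q : ℝ) - mertens (Q * K / j)| ≤ 2 * ε * (Q * K : ℕ) := by
    obtain ⟨hj1, hjK⟩ := mem_Ico.1 hj
    have hQj : Q ≤ Q * K / j := (Nat.le_div_iff_mul_le hj1).2 (Nat.mul_le_mul_left Q hjK.le)
    have hQN : (Q : ℝ) ≤ (Q * K : ℕ) := by exact_mod_cast Nat.le_mul_of_pos_right Q (by omega)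
    have hjN : ((Q * K / j : ℕ) : ℝ) ≤ (Q * K : ℕ) := by exact_mod_cast Nat.div_le_self _ j
    calc |(mertens Q : ℝ) - mertens (Q * K / j)|
        ≤ |(mertens Q : ℝ)| + |(mertens (Q * K / j) : ℝ)| := abs_sub _ _
      _ ≤ ε * Q + ε * (Q * K / j : ℕ) := add_le_add (hM Q le_rfl) (hM _ hQj)
      _ ≤ 2 * ε * (Q * K : ℕ) := by nlinarith
  have hcard : ((#(Ico 1 K) : ℕ) : ℝ) ≤ K := by simp
  calc |∑ j ∈ Ico 1 K, ((mertens Q : ℝ) - mertens (Q * K / j))|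
      ≤ #(Ico 1 K) • (2 * ε * (Q * K : ℕ)) :=
        (abs_sum_le_sum_abs _ _).trans (sum_le_card_nsmul _ _ _ hterm)
    _ ≤ 2 * K * ε * (Q * K : ℕ) := by
      rw [nsmul_eq_mul]
      nlinarith [mul_nonneg hε (Nat.cast_nonneg (α := ℝ) (Q * K))]

theorem abs_sumMoebiusDiv_le {Q K : ℕ} (hQ : 1 ≤ Q) (hK : 1 ≤ K) {ε : ℝ}
    (hM : ∀ t, Q ≤ t → |(mertens t : ℝ)| ≤ ε * t) :
    |sumMoebiusDiv Q| ≤ 2 / K + 2 * K * ε := by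
  have hQ1 : (1 : ℝ) ≤ Q := by exact_mod_cast hQ
  have hQpos : (0 : ℝ) < Q := by linarith
  have hKpos : (0 : ℝ) < K := by exact_mod_cast hK
  have hε : 0 ≤ ε := nonneg_of_mul_nonneg_left ((abs_nonneg _).trans (hM Q le_rfl)) hQpos
  have hdecomp : ((Q * K : ℕ) : ℝ) * sumMoebiusDiv Q =
      (1 + ∑ j ∈ Ico 1 K, ((mertens Q : ℝ) - mertens (Q * K / j))) +
        ∑ n ∈ Icc 1 Q, (μ n : ℝ) * (((Q * K : ℕ) : ℝ) / n - (Q * K / n : ℕ)) := by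
    have hint := congrArg (Int.cast : ℤ → ℝ) (sum_moebius_mul_div_eq hQ hK)
    simp only [Int.cast_sum, Int.cast_mul, Int.cast_natCast, Int.cast_add, Int.cast_one,
      Int.cast_sub] at hint
    rw [← hint, sumMoebiusDiv, mul_sum, ← sum_add_distrib]
    exact sum_congr rfl fun n _ ↦ by ring
  have hNpos : (0 : ℝ) < (Q * K : ℕ) := by positivity
  have hbound : ((Q * K : ℕ) : ℝ) * |sumMoebiusDiv Q| ≤ (Q * K : ℕ) * (2 / K + 2 * K * ε) := by
    have hsum := abs_sum_mertens_sub_le (K := K) hε hM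
    have hfrac := abs_sum_moebius_mul_div_sub_div_le (Q * K) Q
    have hNK : ((Q * K : ℕ) : ℝ) * (2 / K) = 2 * Q := by push_cast; field_simp
    rw [← abs_of_pos hNpos, ← abs_mul, abs_of_pos hNpos, hdecomp, mul_add, hNK]
    refine (abs_add_le _ _).trans ?_
    have := (abs_add_le (1 : ℝ) _).trans (add_le_add_right hsum |(1 : ℝ)|)
    rw [abs_one] at this
    linarith
  exact le_of_mul_le_mul_left hbound hNpos

theorem tendsto_sumMoebiusDiv_of_tendsto_mertens_div
    (h : Tendsto (fun n ↦ (mertens n : ℝ) / n) atTop (nhds 0)) :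
    Tendsto sumMoebiusDiv atTop (nhds 0) := by
  rw [Metric.tendsto_atTop]
  intro δ hδ
  obtain ⟨K, hK⟩ := exists_nat_gt (4 / δ)
  have hKpos : (0 : ℝ) < K := (by positivity : (0 : ℝ) < 4 / δ).trans hK
  obtain ⟨T, hT⟩ := Metric.tendsto_atTop.1 h (δ / (4 * K)) (by positivity)
  refine ⟨max T 1, fun Q hQ ↦ ?_⟩
  have hM (t : ℕ) (ht : Q ≤ t) : |(mertens t : ℝ)| ≤ δ / (4 * K) * t := by
    have htpos : (0 : ℝ) < t := by exact_mod_cast (le_max_right T 1).trans (hQ.trans ht)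
    have := (hT t ((le_max_left T 1).trans (hQ.trans ht))).le
    rwa [Real.dist_eq, sub_zero, abs_div, abs_of_pos htpos, div_le_iff₀ htpos] at this
  have hbound := abs_sumMoebiusDiv_le ((le_max_right T 1).trans hQ) (Nat.cast_pos.1 hKpos) hM
  rw [Real.dist_eq, sub_zero]
  refine hbound.trans_lt ?_
  have h2K : 2 / (K : ℝ) < δ / 2 := by
    rw [div_lt_iff₀ hKpos]
    rw [div_lt_iff₀ hδ] at hK
    linarith
  have hεK : 2 * K * (δ / (4 * K)) = δ / 2 := by field_simp; ring
  linarith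

theorem sum_Icc_mul_eq_mul_sum_sub_sum_range {R : Type*} [CommRing R] (f : ℕ → R) (n : ℕ) :
    ∑ k ∈ Icc 1 n, k * f k = n * ∑ k ∈ Icc 1 n, f k - ∑ i ∈ range n, ∑ k ∈ Icc 1 i, f k := by
  induction n with
  | zero => simp
  | succ n ih =>
    rw [sum_Icc_succ_top (by omega), sum_Icc_succ_top (by omega), sum_range_succ, ih]
    push_cast
    ring

theorem mertens_eq_mul_sumMoebiusDiv_sub (n : ℕ) :
    (mertens n : ℝ) = n * sumMoebiusDiv n - ∑ i ∈ range n, sumMoebiusDiv i := by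
  have hmul : ∑ k ∈ Icc 1 n, (μ k : ℝ) = ∑ k ∈ Icc 1 n, (k : ℝ) * ((μ k : ℝ) / k) :=
    sum_congr rfl fun k hk ↦ by
      have : (k : ℝ) ≠ 0 := by exact_mod_cast (Nat.one_le_iff_ne_zero.1 (mem_Icc.1 hk).1)
      field_simp
  rw [mertens, Int.cast_sum, hmul, sum_Icc_mul_eq_mul_sum_sub_sum_range]
  rfl

theorem tendsto_mertens_div_of_tendsto_sumMoebiusDiv
    (h : Tendsto sumMoebiusDiv atTop (nhds 0)) :
    Tendsto (fun n ↦ (mertens n : ℝ) / n) atTop (nhds 0) := by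
  have hcesaro := h.sub h.cesaro
  rw [sub_zero] at hcesaro
  refine hcesaro.congr' ((eventually_ne_atTop 0).mono fun n hn ↦ ?_)
  simp only [mertens_eq_mul_sumMoebiusDiv_sub]
  field_simp

/-- `M(n)/n → 0` is equivalent to `∑_{i=1}^{n} μ(i)/i → 0`, where `M` is the Mertens
function. -/
theorem mertens_littleO_iff_sum_moebius_div_tendsto_zero :
    Tendsto (fun n : ℕ => ((∑ k ∈ Finset.Icc 1 n, moebius k : ℤ) : ℝ) / n) atTop (nhds 0) ↔
    Tendsto (fun n : ℕ => ∑ i ∈ Finset.Icc 1 n, (moebius i : ℝ) / i) atTop (nhds 0) :=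
  ⟨tendsto_sumMoebiusDiv_of_tendsto_mertens_div, tendsto_mertens_div_of_tendsto_sumMoebiusDiv⟩
end

section
/- The partial sums ∑_{i=1}^{n} μ(i)/i² converge to 6/π² as n → ∞. -/
/-!
Since `μ` is the Dirichlet inverse of the constant function `1`, its L-series is `1 / ζ(s)` for
`Re s > 1`; at `s = 2` the series converges absolutely to `1 / ζ(2) = 6 / π²`.
-/

open ArithmeticFunction Finset Filter

theorem HasSum.tendsto_sum_Icc_one {M : Type*} [AddCommMonoid M] [TopologicalSpace M]
    {f : ℕ → M} {a : M} (hf : HasSum f a) (h0 : f 0 = 0) :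
    Tendsto (fun n => ∑ i ∈ Icc 1 n, f i) atTop (nhds a) := by
  have hIcc (n : ℕ) : ∑ i ∈ Icc 1 n, f i = ∑ i ∈ range (n + 1), f i := by
    rw [range_eq_Ico, sum_eq_sum_Ico_succ_bot (Nat.succ_pos n), h0, _root_.zero_add,
      Nat.succ_eq_add_one, Ico_add_one_right_eq_Icc]
  exact (hf.tendsto_sum_nat.comp (tendsto_add_atTop_nat 1)).congr fun n => (hIcc n).symm

theorem LSeries.term_ofReal_natCast (f : ℕ → ℝ) {k : ℕ} (hk : k ≠ 0) (n : ℕ) :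
    LSeries.term (fun n => (f n : ℂ)) k n = ((f n / (n : ℝ) ^ k : ℝ) : ℂ) := by
  rcases eq_or_ne n 0 with rfl | hn
  · simp [hk]
  · rw [LSeries.term_of_ne_zero hn, Complex.cpow_natCast]
    push_cast
    rfl

theorem LSeries_moebius_eq_inv_riemannZeta {s : ℂ} (hs : 1 < s.re) :
    LSeries (fun n => (moebius n : ℂ)) s = (riemannZeta s)⁻¹ := by
  rw [← LSeries_zeta_eq_riemannZeta hs]
  exact (inv_eq_of_mul_eq_one_right (LSeries_zeta_mul_Lseries_moebius hs)).symm

theorem LSeries_moebius_two : LSeries (fun n => (moebius n : ℂ)) 2 = 6 / (Real.pi : ℂ) ^ 2 := by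
  rw [LSeries_moebius_eq_inv_riemannZeta (by norm_num), riemannZeta_two, inv_div]

theorem hasSum_moebius_div_sq :
    HasSum (fun n : ℕ => (moebius n : ℝ) / (n : ℝ) ^ 2) (6 / Real.pi ^ 2) := by
  have hL : LSeriesHasSum (fun n => ((moebius n : ℝ) : ℂ)) (2 : ℕ) (6 / (Real.pi : ℂ) ^ 2) := by
    simpa only [Complex.ofReal_intCast, Nat.cast_ofNat, LSeries_moebius_two] using
      (LSeriesSummable_moebius_iff.mpr (by norm_num : (1 : ℝ) < (2 : ℂ).re)).LSeriesHasSum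
  rw [LSeriesHasSum, funext (LSeries.term_ofReal_natCast _ two_ne_zero)] at hL
  exact_mod_cast hL

/-- The partial sums `∑_{i=1}^{n} μ(i)/i²` converge to `6/π²` as `n → ∞`. -/
theorem sum_moebius_div_sq_tendsto :
    Tendsto (fun n : ℕ => ∑ i ∈ Finset.Icc 1 n, (moebius i : ℝ) / (i : ℝ) ^ 2) atTop
      (nhds (6 / Real.pi ^ 2)) :=
  hasSum_moebius_div_sq.tendsto_sum_Icc_one (by simp)
end
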